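/- For all natural numbers n ≥ 0, ∑_{k=0}^n (C(n,k))² H_k² = C(2n,n)·(4H_n² − 4H_{2n}H_n + H_{2n}² − H_{2n}^{(2)} + 3·∑_{i=1}^n 1/(i²·C(2i,i))). -/

import Mathlib

/-- The `n`-th harmonic number `H_n = ∑_{k=1}^n 1/k` in `ℚ`. -/
def H (n : ℕ) : ℚ := ∑ k ∈ Finset.Icc 1 n, (1 : ℚ) / k

/-- The generalized harmonic number of order `o`, `H_n^{(o)} = ∑_{k=1}^n 1/k^o` in `ℚ`. -/
def Hgen (o n : ℕ) : ℚ := ∑ k ∈ Finset.Icc 1 n, (1 : ℚ) / (k : ℚ) ^ o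

/-!
Split `H_k² = (H_k² + H_k^{(2)}) - H_k^{(2)}` and put `S_w(n) = ∑_k C(n,k)² w(k)` (`binomSqSum`).
For `w = 1, H, H² + H^{(2)}` creative telescoping in `k`, with Gosper certificates of the
shape `C(n,k)² r(k)`, gives first-order recurrences
`(n+1) S_w(n+1) = 2(2n+1) S_w(n) + (sums with simpler weights)`.
For `w = H^{(2)}` summation by parts against the certificate for `w = 1` gives such a
recurrence with the extra term `(2 C(2n+2,n+1) - 3)/(n+1)`, which produces `∑ 1/(i² C(2i,i))`.
Since `C(2n,n)` satisfies the homogeneous recurrence, each closed form `C(2n,n) f(n)` then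
follows by induction on `n`.
-/

open Finset

@[simp] lemma H_zero : H 0 = 0 := rfl

@[simp] lemma Hgen_zero (o : ℕ) : Hgen o 0 = 0 := rfl

lemma H_succ (n : ℕ) : H (n + 1) = H n + 1 / ((n : ℚ) + 1) := by
  rw [H, sum_Icc_succ_top (by omega), ← H]
  push_cast; rfl

lemma Hgen_succ (o n : ℕ) : Hgen o (n + 1) = Hgen o n + 1 / ((n : ℚ) + 1) ^ o := by
  rw [Hgen, sum_Icc_succ_top (by omega), ← Hgen]
  push_cast; rfl

lemma H_two_mul_succ (n : ℕ) :
    H (2 * (n + 1)) = H (2 * n) + 1 / (2 * (n : ℚ) + 1) + 1 / (2 * (n : ℚ) + 2) := by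
  rw [show 2 * (n + 1) = 2 * n + 1 + 1 by ring, H_succ, H_succ]
  push_cast; ring

lemma Hgen_two_mul_succ (o n : ℕ) :
    Hgen o (2 * (n + 1))
      = Hgen o (2 * n) + 1 / (2 * (n : ℚ) + 1) ^ o + 1 / (2 * (n : ℚ) + 2) ^ o := by
  rw [show 2 * (n + 1) = 2 * n + 1 + 1 by ring, Hgen_succ, Hgen_succ]
  push_cast; ring

lemma cast_add_one_mul_choose_succ (n k : ℕ) :
    ((k : ℚ) + 1) * n.choose (k + 1) = ((n : ℚ) - k) * n.choose k := by
  rcases le_or_gt k n with hkn | hnk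
  · have h : ((n.choose (k + 1) * (k + 1) : ℕ) : ℚ) = (n.choose k * (n - k) : ℕ) := by
      rw [Nat.choose_succ_right_eq]
    push_cast [Nat.cast_sub hkn] at h
    linarith
  · simp [Nat.choose_eq_zero_of_lt hnk, Nat.choose_eq_zero_of_lt (Nat.lt_succ_of_lt hnk)]

lemma cast_add_one_mul_choose_succ_succ (n k : ℕ) :
    ((k : ℚ) + 1) * (n + 1).choose (k + 1) = ((n : ℚ) + 1) * n.choose k := by
  have h : (((n + 1) * n.choose k : ℕ) : ℚ) = ((n + 1).choose (k + 1) * (k + 1) : ℕ) := by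
    rw [Nat.add_one_mul_choose_eq]
  push_cast at h
  linarith

lemma cast_succ_mul_centralBinom_succ (n : ℕ) :
    ((n : ℚ) + 1) * (n + 1).centralBinom = 2 * (2 * n + 1) * n.centralBinom := by
  exact_mod_cast Nat.succ_mul_centralBinom_succ n

def binomSqSum (w : ℕ → ℚ) (n : ℕ) : ℚ := ∑ k ∈ range (n + 1), (n.choose k : ℚ) ^ 2 * w k

lemma binomSqSum_eq_sum_range_add_two (w : ℕ → ℚ) (n : ℕ) :
    binomSqSum w n = ∑ k ∈ range (n + 2), (n.choose k : ℚ) ^ 2 * w k := by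
  simp [binomSqSum, sum_range_succ _ (n + 1)]

lemma binomSqSum_one (n : ℕ) : binomSqSum (fun _ ↦ 1) n = n.centralBinom := by
  simp only [binomSqSum, mul_one, Nat.centralBinom_eq_two_mul_choose]
  exact_mod_cast Nat.sum_range_choose_sq n

lemma binomSqSum_const (c : ℚ) (n : ℕ) : binomSqSum (fun _ ↦ c) n = c * n.centralBinom := by
  rw [← binomSqSum_one, binomSqSum, binomSqSum, mul_sum]
  exact sum_congr rfl fun k _ ↦ by ring

lemma binomSqSum_affine (a b : ℚ) (w : ℕ → ℚ) (n : ℕ) :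
    binomSqSum (fun k ↦ a * w k + b) n = a * binomSqSum w n + b * n.centralBinom := by
  rw [← binomSqSum_const, binomSqSum, binomSqSum, binomSqSum, mul_sum, ← sum_add_distrib]
  exact sum_congr rfl fun k _ ↦ by ring

lemma binomSqSum_sub (w u : ℕ → ℚ) (n : ℕ) :
    binomSqSum (fun k ↦ w k - u k) n = binomSqSum w n - binomSqSum u n := by
  simp only [binomSqSum, mul_sub, sum_sub_distrib]

lemma binomSqSum_succ_of_telescope (n : ℕ) (w e G : ℕ → ℚ) (hG₀ : G 0 = 0)
    (hG : G (n + 2) = 0)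
    (h : ∀ k, ((n : ℚ) + 1) * ((n + 1).choose k) ^ 2 * w k
      - 2 * (2 * n + 1) * (n.choose k) ^ 2 * w k - e k = G (k + 1) - G k) :
    ((n : ℚ) + 1) * binomSqSum w (n + 1) - 2 * (2 * n + 1) * binomSqSum w n
      = ∑ k ∈ range (n + 2), e k := by
  have := sum_range_sub G (n + 2)
  rw [hG, hG₀, sub_zero, ← sum_congr rfl fun k _ ↦ h k] at this
  simp only [sum_sub_distrib, mul_assoc, ← mul_sum] at this
  rw [binomSqSum_eq_sum_range_add_two w n, binomSqSum]
  linarith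

def gosperTerm (n : ℕ) (r : ℕ → ℚ) : ℕ → ℚ
  | 0 => 0
  | k + 1 => (n.choose k : ℚ) ^ 2 * r k

/-- `r` certifies `(n+1) S_w(n+1) = 2(2n+1) S_w(n) + S_v(n)`: the two conditions are the
telescoping identity `gosperTerm_sub` at `k = 0` and, at `k = j + 1`, that identity multiplied by
`(j+1)² / C(n,j)²`, using `(j+1) C(n+1,j+1) = (n+1) C(n,j)` and `(j+1) C(n,j+1) = (n-j) C(n,j)`. -/
def IsBinomSqCert (n : ℕ) (w v r : ℕ → ℚ) : Prop :=
  -(3 * (n : ℚ) + 1) * w 0 - v 0 = r 0 ∧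
    ∀ j : ℕ, (((n : ℚ) + 1) ^ 3 - 2 * (2 * n + 1) * (n - j) ^ 2) * w (j + 1)
      - ((n : ℚ) - j) ^ 2 * v (j + 1) = ((n : ℚ) - j) ^ 2 * r (j + 1) - ((j : ℚ) + 1) ^ 2 * r j

lemma gosperTerm_sub {n : ℕ} {w v r : ℕ → ℚ} (hcert : IsBinomSqCert n w v r) (k : ℕ) :
    ((n : ℚ) + 1) * ((n + 1).choose k) ^ 2 * w k - 2 * (2 * n + 1) * (n.choose k) ^ 2 * w k
      - (n.choose k) ^ 2 * v k = gosperTerm n r (k + 1) - gosperTerm n r k := by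
  obtain ⟨h₀, h⟩ := hcert
  rcases k with _ | j
  · simp only [gosperTerm, Nat.choose_zero_right, Nat.cast_one, one_pow, one_mul, mul_one]
    linear_combination h₀
  · refine mul_left_cancel₀ (by positivity : ((j : ℚ) + 1) ^ 2 ≠ 0) ?_
    simp only [gosperTerm]
    linear_combination (n + 1) * w (j + 1)
        * ((j + 1) * (n + 1).choose (j + 1) + (n + 1) * n.choose j)
        * cast_add_one_mul_choose_succ_succ n j
      - (2 * (2 * n + 1) * w (j + 1) + v (j + 1) + r (j + 1))
        * ((j + 1) * n.choose (j + 1) + (n - j) * n.choose j) * cast_add_one_mul_choose_succ n j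
      + (n.choose j : ℚ) ^ 2 * h j

lemma binomSqSum_succ_of_isBinomSqCert {n : ℕ} {w v r : ℕ → ℚ} (hcert : IsBinomSqCert n w v r) :
    ((n : ℚ) + 1) * binomSqSum w (n + 1) = 2 * (2 * n + 1) * binomSqSum w n + binomSqSum v n := by
  have := binomSqSum_succ_of_telescope n w _ (gosperTerm n r) rfl
    (by simp [gosperTerm, Nat.choose_succ_self]) (gosperTerm_sub hcert)
  rw [← binomSqSum_eq_sum_range_add_two] at this
  linarith

lemma binomSqSum_H_succ (n : ℕ) :
    ((n : ℚ) + 1) * binomSqSum H (n + 1)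
      = 2 * (2 * n + 1) * binomSqSum H n + (4 * n + 1) / (n + 1) * n.centralBinom := by
  have := binomSqSum_succ_of_isBinomSqCert (n := n) (w := H) (v := fun _ ↦ (4 * n + 1) / (n + 1))
    (r := fun j ↦ (2 * j - 3 * n - 1) * H j + (3 * j - 4 * n - 1) / (n + 1))
    ⟨by simp only [H_zero, CharP.cast_eq_zero]; ring, fun j ↦ by
      dsimp only; rw [H_succ]; push_cast; field_simp; ring⟩
  rwa [binomSqSum_const] at this

/-- Unlike `H k ^ 2`, this weight has the clean forward difference `2 H_{k+1} / (k+1)`. -/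
def HPlus (k : ℕ) : ℚ := H k ^ 2 + Hgen 2 k

lemma HPlus_succ (k : ℕ) : HPlus (k + 1) = HPlus k + 2 * H (k + 1) / ((k : ℚ) + 1) := by
  rw [HPlus, HPlus, H_succ, Hgen_succ]
  field_simp
  ring

lemma binomSqSum_HPlus_succ (n : ℕ) :
    ((n : ℚ) + 1) * binomSqSum HPlus (n + 1) = 2 * (2 * n + 1) * binomSqSum HPlus n
      + 2 * (4 * n + 1) / (n + 1) * binomSqSum H n
      + 2 * (5 * n + 1) / (n + 1) ^ 2 * n.centralBinom := by
  have := binomSqSum_succ_of_isBinomSqCert (n := n) (w := HPlus)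
    (v := fun j ↦ 2 * (4 * n + 1) / (n + 1) * H j + 2 * (5 * n + 1) / (n + 1) ^ 2)
    (r := fun j ↦ (2 * j - 3 * n - 1) * HPlus j + 2 * (3 * j - 4 * n - 1) / (n + 1) * H j
      + 2 * (4 * j - 5 * n - 1) / (n + 1) ^ 2)
    ⟨by simp only [HPlus, H_zero, Hgen_zero, CharP.cast_eq_zero]; ring, fun j ↦ by
      dsimp only; rw [HPlus_succ, H_succ]; push_cast; field_simp; ring⟩
  rw [binomSqSum_affine] at this
  linarith

lemma two_mul_sum_range_mul_choose_sq (m : ℕ) :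
    2 * ∑ k ∈ range (m + 1), (k : ℚ) * (m.choose k : ℚ) ^ 2 = m * m.centralBinom := by
  have hreflect := sum_range_reflect (fun k ↦ (k : ℚ) * (m.choose k : ℚ) ^ 2) (m + 1)
  rw [Nat.add_sub_cancel] at hreflect
  have hsymm : ∑ k ∈ range (m + 1), ((m - k : ℕ) : ℚ) * (m.choose (m - k) : ℚ) ^ 2
      = ∑ k ∈ range (m + 1), ((m : ℚ) - k) * (m.choose k : ℚ) ^ 2 := by
    refine sum_congr rfl fun k hk ↦ ?_
    have hkm : k ≤ m := Nat.lt_succ_iff.mp (mem_range.mp hk)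
    rw [Nat.cast_sub hkm, Nat.choose_symm hkm]
  rw [hsymm] at hreflect
  have hsplit : ∑ k ∈ range (m + 1), ((m : ℚ) - k) * (m.choose k : ℚ) ^ 2
      = m * binomSqSum (fun _ ↦ 1) m
        - ∑ k ∈ range (m + 1), (k : ℚ) * (m.choose k : ℚ) ^ 2 := by
    rw [binomSqSum, mul_sum, ← sum_sub_distrib]
    exact sum_congr rfl fun k _ ↦ by ring
  rw [hsplit, binomSqSum_one] at hreflect
  linarith

lemma sum_range_choose_succ_sq (m : ℕ) :
    ∑ k ∈ range (m + 1), (m.choose (k + 1) : ℚ) ^ 2 = m.centralBinom - 1 := by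
  have := binomSqSum_eq_sum_range_add_two (fun _ ↦ 1) m
  rw [binomSqSum_one, sum_range_succ'] at this
  simp only [mul_one, Nat.choose_zero_right, Nat.cast_one, one_pow] at this
  linarith

/-- `H^{(2)}` has no certificate of the form `C(n,k)² r(k)`; summing by parts against the one
for the constant weight leaves `C(n,k)² (2k-3n-1) / (k+1)²`, which the absorption identity
rewrites as `C(n+1,k+1)² (2k-3n-1) / (n+1)²`. -/
lemma gosperTerm_mul_Hgen_two_sub (n : ℕ) (k : ℕ) :
    ((n : ℚ) + 1) * ((n + 1).choose k) ^ 2 * Hgen 2 k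
      - 2 * (2 * n + 1) * (n.choose k) ^ 2 * Hgen 2 k
      + (2 * k - 3 * n - 1) * ((n + 1).choose (k + 1) : ℚ) ^ 2 / ((n : ℚ) + 1) ^ 2
      = gosperTerm n (fun j ↦ 2 * j - 3 * n - 1) (k + 1) * Hgen 2 (k + 1)
        - gosperTerm n (fun j ↦ 2 * j - 3 * n - 1) k * Hgen 2 k := by
  have htel := gosperTerm_sub (n := n) (w := fun _ ↦ 1) (v := fun _ ↦ 0)
    (r := fun j ↦ 2 * j - 3 * n - 1) ⟨by push_cast; ring, fun j ↦ by push_cast; ring⟩ k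
  have hsq : ((n + 1).choose (k + 1) : ℚ) ^ 2 / ((n : ℚ) + 1) ^ 2
      = (n.choose k : ℚ) ^ 2 / ((k : ℚ) + 1) ^ 2 := by
    rw [div_eq_div_iff (by positivity) (by positivity)]
    linear_combination ((k + 1) * (n + 1).choose (k + 1) + (n + 1) * n.choose k)
      * cast_add_one_mul_choose_succ_succ n k
  have hg : gosperTerm n (fun j ↦ 2 * j - 3 * n - 1) (k + 1)
      = (n.choose k : ℚ) ^ 2 * (2 * k - 3 * n - 1) := rfl
  rw [hg] at htel ⊢
  rw [Hgen_succ]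
  linear_combination (Hgen 2 k) * htel + (2 * k - 3 * n - 1) * hsq

lemma two_mul_sum_range_succ_mul_choose_succ_sq (m : ℕ) :
    2 * ∑ k ∈ range (m + 1), ((k : ℚ) + 1) * (m.choose (k + 1) : ℚ) ^ 2
      = (m : ℚ) * m.centralBinom := by
  have hshift := sum_range_succ' (fun k ↦ (k : ℚ) * (m.choose k : ℚ) ^ 2) (m + 1)
  rw [sum_range_succ, Nat.choose_succ_self] at hshift
  push_cast at hshift
  rw [← two_mul_sum_range_mul_choose_sq]
  linarith

lemma binomSqSum_Hgen_two_succ (n : ℕ) :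
    ((n : ℚ) + 1) * binomSqSum (Hgen 2) (n + 1)
      = 2 * (2 * n + 1) * binomSqSum (Hgen 2) n + (2 * (n + 1).centralBinom - 3) / (n + 1) := by
  have htel := binomSqSum_succ_of_telescope n (Hgen 2)
    (fun k ↦ -((2 * k - 3 * n - 1) * ((n + 1).choose (k + 1) : ℚ) ^ 2 / ((n : ℚ) + 1) ^ 2))
    (fun k ↦ gosperTerm n (fun j ↦ 2 * j - 3 * n - 1) k * Hgen 2 k) (by simp [gosperTerm])
    (by simp [gosperTerm, Nat.choose_succ_self])
    fun k ↦ by linear_combination gosperTerm_mul_Hgen_two_sub n k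
  have hsum : ∑ k ∈ range (n + 2),
      -((2 * k - 3 * n - 1) * ((n + 1).choose (k + 1) : ℚ) ^ 2 / ((n : ℚ) + 1) ^ 2)
      = (3 * (n + 1) * ∑ k ∈ range (n + 2), ((n + 1).choose (k + 1) : ℚ) ^ 2
        - 2 * ∑ k ∈ range (n + 2), ((k : ℚ) + 1) * ((n + 1).choose (k + 1) : ℚ) ^ 2)
        / ((n : ℚ) + 1) ^ 2 := by
    rw [mul_sum, mul_sum, ← sum_sub_distrib, sum_div]
    exact sum_congr rfl fun k _ ↦ by ring
  rw [hsum, sum_range_choose_succ_sq, two_mul_sum_range_succ_mul_choose_succ_sq] at htel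
  rw [← sub_eq_iff_eq_add', htel]
  push_cast
  field_simp
  ring

lemma eq_centralBinom_mul_of_succ (s f b : ℕ → ℚ)
    (hs : ∀ n : ℕ, ((n : ℚ) + 1) * s (n + 1) = 2 * (2 * n + 1) * s n + b n)
    (hf : ∀ n : ℕ, 2 * (2 * (n : ℚ) + 1) * n.centralBinom * (f (n + 1) - f n) = b n)
    (h₀ : s 0 = f 0) (n : ℕ) : s n = n.centralBinom * f n := by
  induction n with
  | zero => simpa using h₀
  | succ n ih =>
    refine mul_left_cancel₀ (by positivity : ((n : ℚ) + 1) ≠ 0) ?_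
    rw [hs, ih, ← hf]
    linear_combination -f (n + 1) * cast_succ_mul_centralBinom_succ n

lemma binomSqSum_H (n : ℕ) : binomSqSum H n = n.centralBinom * (2 * H n - H (2 * n)) := by
  refine eq_centralBinom_mul_of_succ _ (fun n ↦ 2 * H n - H (2 * n)) _ binomSqSum_H_succ
    (fun n ↦ ?_) (by simp [binomSqSum]) n
  rw [H_succ, H_two_mul_succ]
  field_simp
  ring

lemma binomSqSum_HPlus (n : ℕ) :
    binomSqSum HPlus n
      = n.centralBinom * ((2 * H n - H (2 * n)) ^ 2 + 2 * Hgen 2 n - Hgen 2 (2 * n)) := by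
  refine eq_centralBinom_mul_of_succ _
    (fun n ↦ (2 * H n - H (2 * n)) ^ 2 + 2 * Hgen 2 n - Hgen 2 (2 * n)) _
    (fun n ↦ by rw [binomSqSum_HPlus_succ, add_assoc]) (fun n ↦ ?_)
    (by simp [binomSqSum, HPlus]) n
  rw [binomSqSum_H, H_succ, H_two_mul_succ, Hgen_succ, Hgen_two_mul_succ]
  field_simp
  ring

lemma binomSqSum_Hgen_two (n : ℕ) :
    binomSqSum (Hgen 2) n = n.centralBinom
      * (2 * Hgen 2 n - 3 * ∑ i ∈ Icc 1 n, 1 / ((i : ℚ) ^ 2 * i.centralBinom)) := by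
  refine eq_centralBinom_mul_of_succ _
    (fun n ↦ 2 * Hgen 2 n - 3 * ∑ i ∈ Icc 1 n, 1 / ((i : ℚ) ^ 2 * i.centralBinom)) _
    binomSqSum_Hgen_two_succ (fun n ↦ ?_) (by simp [binomSqSum]) n
  have hcb : ((n + 1).centralBinom : ℚ) ≠ 0 := by exact_mod_cast (n + 1).centralBinom_ne_zero
  rw [Hgen_succ, sum_Icc_succ_top (by omega), ← cast_succ_mul_centralBinom_succ]
  push_cast
  field_simp
  ring

theorem stmt3 (n : ℕ) :
    ∑ k ∈ Finset.range (n + 1), ((n.choose k : ℚ)) ^ 2 * (H k) ^ 2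
      = ((2 * n).choose n : ℚ) *
          (4 * (H n) ^ 2 - 4 * H (2 * n) * H n + (H (2 * n)) ^ 2 - Hgen 2 (2 * n)
            + 3 * ∑ i ∈ Finset.Icc 1 n, 1 / ((i : ℚ) ^ 2 * ((2 * i).choose i : ℚ))) := by
  have hsplit : ∑ k ∈ range (n + 1), (n.choose k : ℚ) ^ 2 * H k ^ 2
      = binomSqSum HPlus n - binomSqSum (Hgen 2) n := by
    rw [← binomSqSum_sub]
    exact sum_congr rfl fun k _ ↦ by simp only [HPlus]; ring
  simp only [← Nat.centralBinom_eq_two_mul_choose]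
  rw [hsplit, binomSqSum_HPlus, binomSqSum_Hgen_two]
  ring
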